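/- arXiv:1012.2440 — 8 statements merged into one kernel-verified Lean document; each statement's English description precedes it below -/
import Mathlib

section
/- In the id-assignment system on n agents, every state s reachable from the zero state satisfies s(u) ≤ n − 1 for every agent u. (In order for an id to reach value v, at least v + 1 agents must be present, so no agent id ever exceeds n − 1.) -/
/-- A step of the id-assignment system: two distinct agents with equal ids
interact, and the initiator increases its id by one. -/
def IdStep {V : Type*} [DecidableEq V] (s s' : V → ℕ) : Prop :=
  ∃ u v : V, u ≠ v ∧ s u = s v ∧ s' = Function.update s u (s u + 1)

/-- The key invariant: if some agent has id at least `v`, then the number of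
agents with id at least `v`, plus `v`, is at most `n`. -/
def IdInv {V : Type*} [DecidableEq V] [Fintype V] (n : ℕ) (s : V → ℕ) : Prop :=
  ∀ v : ℕ, (∃ u : V, v ≤ s u) →
    (Finset.univ.filter (fun u => v ≤ s u)).card + v ≤ n

lemma idinv_step {V : Type*} [DecidableEq V] [Fintype V] (n : ℕ)
    {s s' : V → ℕ} (hinv : IdInv n s) (hstep : IdStep s s') : IdInv n s' := by
  obtain ⟨u, w, huw, heq, rfl⟩ := hstep
  intro v hv
  set c := s u with hc
  by_cases hvc : v ≤ c
  ·
    have hsub : (Finset.univ.filter (fun x => v ≤ Function.update s u (c + 1) x))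
        ⊆ Finset.univ.filter (fun x => v ≤ s x) := by
      intro x hx
      simp only [Finset.mem_filter, Finset.mem_univ, true_and] at hx ⊢
      rcases eq_or_ne x u with rfl | hxu
      · exact hvc
      · rwa [Function.update_of_ne hxu] at hx
    have hold : ∃ x : V, v ≤ s x := ⟨u, hvc⟩
    calc (Finset.univ.filter (fun x => v ≤ Function.update s u (c + 1) x)).card + v
        ≤ (Finset.univ.filter (fun x => v ≤ s x)).card + v :=
          Nat.add_le_add_right (Finset.card_le_card hsub) v
      _ ≤ n := hinv v hold
  · -- v ≥ c + 1; only u can be new in the set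
    push_neg at hvc
    have hvc' : c + 1 ≤ v := hvc
    -- new set ⊆ old set ∪ {u}
    have hsub : (Finset.univ.filter (fun x => v ≤ Function.update s u (c + 1) x))
        ⊆ insert u (Finset.univ.filter (fun x => v ≤ s x)) := by
      intro x hx
      simp only [Finset.mem_filter, Finset.mem_univ, true_and] at hx
      rcases eq_or_ne x u with rfl | hxu
      · exact Finset.mem_insert_self _ _
      · rw [Function.update_of_ne hxu] at hx
        exact Finset.mem_insert_of_mem (by simp [hx])
    -- bound at level c: S_c contains u, w, and S_v \ {u,w}
    have hSc := hinv c ⟨u, le_refl c⟩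
    -- S_v old ∪ {u, w} ⊆ S_c old
    have hsub2 : insert u (insert w (Finset.univ.filter (fun x => v ≤ s x)))
        ⊆ Finset.univ.filter (fun x => c ≤ s x) := by
      intro x hx
      simp only [Finset.mem_insert, Finset.mem_filter, Finset.mem_univ, true_and] at hx ⊢
      rcases hx with rfl | rfl | hx
      · exact le_refl c
      · exact le_of_eq heq
      · exact le_trans (le_of_lt (Nat.lt_of_lt_of_le (Nat.lt_succ_self c) hvc')) hx
    have hunotin : u ∉ insert w (Finset.univ.filter (fun x => v ≤ s x)) := by
      simp only [Finset.mem_insert, Finset.mem_filter, Finset.mem_univ, true_and]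
      push_neg
      exact ⟨huw, by omega⟩
    have hwnotin : w ∉ Finset.univ.filter (fun x => v ≤ s x) := by
      simp only [Finset.mem_filter, Finset.mem_univ, true_and]
      omega
    have hcard2 : (Finset.univ.filter (fun x => v ≤ s x)).card + 2
        ≤ (Finset.univ.filter (fun x => c ≤ s x)).card := by
      have := Finset.card_le_card hsub2
      rw [Finset.card_insert_of_notMem hunotin, Finset.card_insert_of_notMem hwnotin] at this
      omega
    have hnew : (Finset.univ.filter (fun x => v ≤ Function.update s u (c + 1) x)).card
        ≤ (Finset.univ.filter (fun x => v ≤ s x)).card + 1 := by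
      calc _ ≤ (insert u (Finset.univ.filter (fun x => v ≤ s x))).card :=
            Finset.card_le_card hsub
        _ ≤ _ := Finset.card_insert_le _ _
    -- if v > c + 1, the new set equals the old set (u has id c+1 < v)
    rcases eq_or_lt_of_le hvc' with hveq | hvlt
    · -- v = c + 1
      omega
    · -- v > c + 1 : u not in new set either, new set ⊆ old set
      have hsub' : (Finset.univ.filter (fun x => v ≤ Function.update s u (c + 1) x))
          ⊆ Finset.univ.filter (fun x => v ≤ s x) := by
        intro x hx
        simp only [Finset.mem_filter, Finset.mem_univ, true_and] at hx ⊢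
        rcases eq_or_ne x u with rfl | hxu
        · rw [Function.update_self] at hx; omega
        · rwa [Function.update_of_ne hxu] at hx
      obtain ⟨x, hx⟩ := hv
      have hxs : v ≤ s x := by
        rcases eq_or_ne x u with rfl | hxu
        · rw [Function.update_self] at hx; omega
        · rwa [Function.update_of_ne hxu] at hx
      have := hinv v ⟨x, hxs⟩
      have := Finset.card_le_card hsub'
      omega

lemma idinv_reach {V : Type*} [DecidableEq V] [Fintype V] (n : ℕ)
    (hcard : Fintype.card V = n) {s : V → ℕ}
    (hreach : Relation.ReflTransGen IdStep (fun _ => 0) s) : IdInv n s := by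
  induction hreach with
  | refl =>
    intro v ⟨u, hu⟩
    simp only [Nat.le_zero] at hu
    subst hu
    calc (Finset.univ.filter (fun u : V => (0:ℕ) ≤ 0)).card + 0
        ≤ Fintype.card V := by simp [Finset.card_univ]
      _ = n := hcard
  | tail _ hstep ih => exact idinv_step n ih hstep

/-- In the id-assignment system on `n ≥ 1` agents, every state reachable from
the zero state satisfies `s u ≤ n - 1` for every agent `u`. -/
theorem id_le_card_sub_one {V : Type*} [DecidableEq V] [Fintype V] (n : ℕ)
    (hn : 1 ≤ n) (hcard : Fintype.card V = n) (s : V → ℕ)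
    (hreach : Relation.ReflTransGen IdStep (fun _ => 0) s) :
    ∀ u : V, s u ≤ n - 1 := by
  intro u
  have hinv := idinv_reach n hcard hreach
  have h := hinv (s u) ⟨u, le_refl _⟩
  have hu : u ∈ Finset.univ.filter (fun x => s u ≤ s x) := by simp
  have hpos := Finset.card_pos.mpr ⟨u, hu⟩
  omega
end

section
/- In the id-assignment system on n agents, the set of values taken by any reachable state is downward closed: for every state s reachable from the zero state and every v ≥ 1, if some agent u has s(u) = v, then some agent w has s(w) = v − 1. -/
/-- The set of id values of any reachable state is downward closed: if some
agent holds id `v ≥ 1`, then some agent holds id `v - 1`. -/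
theorem id_values_downward_closed {V : Type*} [DecidableEq V] [Fintype V]
    (n : ℕ) (hn : 1 ≤ n) (hcard : Fintype.card V = n) (s : V → ℕ)
    (hreach : Relation.ReflTransGen IdStep (fun _ => 0) s) :
    ∀ v : ℕ, 1 ≤ v → (∃ u : V, s u = v) → ∃ w : V, s w = v - 1 := by
  induction hreach with
  | refl =>
    rintro v hv ⟨u, hu⟩
    simp only [show (fun _ : V => 0) u = 0 from rfl] at hu
    omega
  | tail _ hstep ih =>
    rename_i b c _
    obtain ⟨u, w, huw, heq, rfl⟩ := hstep
    rintro v hv ⟨x, hx⟩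
    by_cases hxu : x = u
    · subst hxu
      rw [Function.update_self] at hx
      exact ⟨w, by rw [Function.update_of_ne (Ne.symm huw), ← heq]; omega⟩
    · rw [Function.update_of_ne hxu] at hx
      obtain ⟨y, hy⟩ := ih v hv ⟨x, hx⟩
      by_cases hyu : y = u
      · subst hyu
        exact ⟨w, by rw [Function.update_of_ne (Ne.symm huw), ← heq, hy]⟩
      · exact ⟨y, by rw [Function.update_of_ne hyu, hy]⟩
end

section
/- In the id-assignment system on n agents: a state s admits no step if and only if s is injective; moreover, every reachable state s that admits no step is a bijection from the set of agents onto {0, 1, …, n − 1} (i.e., the protocol assigns exactly the ids 0 through n − 1). -/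
lemma id_inv {V : Type*} [DecidableEq V] [Fintype V] (n : ℕ)
    (hcard : Fintype.card V = n) {s : V → ℕ}
    (h : Relation.ReflTransGen IdStep (fun _ => 0) s) :
    ∀ k : ℕ, min (k + 1) n ≤ (Finset.univ.filter (fun v => s v ≤ k)).card := by
  induction h with
  | refl =>
    intro k
    have : (Finset.univ.filter (fun v : V => (0:ℕ) ≤ k)) = Finset.univ := by
      simp
    rw [this, Finset.card_univ, hcard]
    omega
  | @tail t s' _ hstep ih =>
    obtain ⟨u, v, huv, heq, rfl⟩ := hstep
    intro k
    rcases eq_or_ne k (t u) with rfl | hk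
    · -- the filtered set loses exactly u
      have hset : (Finset.univ.filter (fun w => Function.update t u (t u + 1) w ≤ t u))
          = (Finset.univ.filter (fun w => t w ≤ t u)).erase u := by
        ext w
        rcases eq_or_ne w u with rfl | hw
        · simp [Function.update_apply]
        · simp [Function.update_apply, hw]
      rw [hset]
      have humem : u ∈ Finset.univ.filter (fun w => t w ≤ t u) := by simp
      rw [Finset.card_erase_of_mem humem]
      -- lower bound on the original card
      rcases Nat.eq_zero_or_pos (t u) with h0 | hpos
      · have hsub : ({u, v} : Finset V) ⊆ Finset.univ.filter (fun w => t w ≤ t u) := by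
          intro w hw
          simp only [Finset.mem_insert, Finset.mem_singleton] at hw
          rcases hw with rfl | rfl <;> simp [heq]
        have h2 : ({u, v} : Finset V).card = 2 := Finset.card_pair huv
        have := Finset.card_le_card hsub
        omega
      · obtain ⟨m, hm⟩ : ∃ m, t u = m + 1 := ⟨t u - 1, by omega⟩
        have hvnot : v ∉ Finset.univ.filter (fun w => t w ≤ m) := by
          simp [← heq, hm]
        have hunot : u ∉ insert v (Finset.univ.filter (fun w => t w ≤ m)) := by
          simp [hm, huv]
        have hsub : insert u (insert v (Finset.univ.filter (fun w => t w ≤ m)))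
            ⊆ Finset.univ.filter (fun w => t w ≤ t u) := by
          intro w hw
          simp only [Finset.mem_insert, Finset.mem_filter, Finset.mem_univ, true_and] at hw ⊢
          rcases hw with rfl | rfl | hw
          · exact le_refl _
          · exact heq.ge
          · omega
        have hcard2 := Finset.card_le_card hsub
        rw [Finset.card_insert_of_notMem hunot, Finset.card_insert_of_notMem hvnot] at hcard2
        have := ih m
        omega
    · -- the filtered set is unchanged
      have hset : (Finset.univ.filter (fun w => Function.update t u (t u + 1) w ≤ k))
          = Finset.univ.filter (fun w => t w ≤ k) := by
        ext w
        rcases eq_or_ne w u with rfl | hw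
        · simp only [Finset.mem_filter, Finset.mem_univ, true_and, Function.update_self]
          omega
        · simp [Function.update_apply, hw]
      rw [hset]
      exact ih k

/-- A state admits no step iff it is injective; moreover every reachable state
admitting no step is a bijection from the agents onto `{0, 1, …, n - 1}`. -/
theorem id_terminal_iff_injective_and_bijOn {V : Type*} [DecidableEq V]
    [Fintype V] (n : ℕ) (hn : 1 ≤ n) (hcard : Fintype.card V = n) :
    (∀ s : V → ℕ, (¬ ∃ s' : V → ℕ, IdStep s s') ↔ Function.Injective s) ∧
    (∀ s : V → ℕ, Relation.ReflTransGen IdStep (fun _ => 0) s →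
      (¬ ∃ s' : V → ℕ, IdStep s s') →
      Set.BijOn s Set.univ {k : ℕ | k < n}) := by
  have hterm_iff : ∀ s : V → ℕ, (¬ ∃ s' : V → ℕ, IdStep s s') ↔ Function.Injective s := by
    intro s
    constructor
    · intro h a b hab
      by_contra hne
      exact h ⟨Function.update s a (s a + 1), a, b, hne, hab, rfl⟩
    · rintro hinj ⟨s', u, v, huv, heq, -⟩
      exact huv (hinj heq)
  refine ⟨hterm_iff, fun s hreach hterm => ?_⟩
  have hinj : Function.Injective s := (hterm_iff s).mp hterm
  have hinv := id_inv n hcard hreach (n - 1)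
  have hfull : (Finset.univ.filter (fun v => s v ≤ n - 1)) = Finset.univ := by
    apply Finset.eq_univ_of_card
    have hle : (Finset.univ.filter (fun v => s v ≤ n - 1)).card ≤ Fintype.card V :=
      Finset.card_filter_le _ _
    omega
  have hlt : ∀ v : V, s v < n := by
    intro v
    have : v ∈ Finset.univ.filter (fun w => s w ≤ n - 1) := by
      rw [hfull]; exact Finset.mem_univ v
    simp only [Finset.mem_filter] at this
    omega
  constructor
  · intro v _
    exact hlt v
  refine ⟨fun a _ b _ h => hinj h, ?_⟩
  -- surjectivity onto {k | k < n}
  intro k hk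
  have hkn : k < n := hk
  let e : V → Fin n := fun v => ⟨s v, hlt v⟩
  have heinj : Function.Injective e := by
    intro a b hab
    apply hinj
    exact congrArg Fin.val hab
  have hbij : Function.Bijective e :=
    (Fintype.bijective_iff_injective_and_card e).mpr ⟨heinj, by simp [hcard]⟩
  obtain ⟨v, hv⟩ := hbij.surjective ⟨k, hkn⟩
  exact ⟨v, Set.mem_univ v, congrArg Fin.val hv⟩
end

section
/- In the id-assignment system on n agents, there is no infinite sequence of steps starting from the zero state, and every maximal finite sequence of steps starting from the zero state has length exactly n(n − 1)/2 (each step increases the sum of all ids by exactly 1, and terminal states have id sum 0 + 1 + ⋯ + (n − 1)). -/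
/-!
Each step raises the sum of the ids by one. Along any run from the zero state, at most `n - k`
agents have id `≥ k`: a step creating a new id `j + 1` needs two agents with id `j`, only one of
which moves up. In particular every id stays below `n`, so the sum (hence the run length)
is bounded. A terminal state has pairwise distinct ids, all below `n`, so they are exactly
`0, …, n - 1`, whose sum is `n (n - 1) / 2`.
-/

open Finset

namespace IdStep

variable {V : Type*} [DecidableEq V]

theorem sum_eq [Fintype V] {s s' : V → ℕ} (h : IdStep s s') : ∑ v, s' v = ∑ v, s v + 1 := by
  obtain ⟨u, -, -, -, rfl⟩ := h
  rw [sum_update_of_mem (mem_univ u), sum_eq_sum_sdiff_singleton_add (mem_univ u) s]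
  ring

theorem injective_of_not_exists {s : V → ℕ} (h : ¬ ∃ s', IdStep s s') : Function.Injective s := by
  intro u v huv
  by_contra hne
  exact h ⟨_, u, v, hne, huv, rfl⟩

end IdStep

section Level

variable {V : Type*} [Fintype V]

def level (s : V → ℕ) (k : ℕ) : Finset V := univ.filter fun v => k ≤ s v

theorem card_level_add_two_le [DecidableEq V] {s : V → ℕ} {u v : V} (huv : u ≠ v)
    (he : s u = s v) : #(level s (s u + 1)) + 2 ≤ #(level s (s u)) := by
  have hu : u ∉ level s (s u + 1) := by simp [level]
  have hv : v ∉ level s (s u + 1) := by simp [level, he]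
  have hsub : insert v (insert u (level s (s u + 1))) ⊆ level s (s u) := by
    intro w hw
    simp only [level, mem_insert, mem_filter, mem_univ, true_and] at hw ⊢
    rcases hw with rfl | rfl | hw <;> omega
  calc #(level s (s u + 1)) + 2 = #(insert v (insert u (level s (s u + 1)))) := by
        rw [card_insert_of_notMem (by simp [huv.symm, hv]), card_insert_of_notMem hu]
    _ ≤ _ := card_le_card hsub

theorem level_update_subset [DecidableEq V] (s : V → ℕ) (u : V) (k : ℕ) :
    level (Function.update s u (s u + 1)) k ⊆ insert u (level s k) := by
  intro w hw
  by_cases hwu : w = u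
  · simp [hwu]
  · simpa [level, hwu] using hw

theorem level_update_of_ne [DecidableEq V] (s : V → ℕ) (u : V) {k : ℕ} (hk : k ≠ s u + 1) :
    level (Function.update s u (s u + 1)) k = level s k := by
  refine filter_congr fun w _ => ?_
  by_cases hwu : w = u
  · subst hwu
    rw [Function.update_self]
    omega
  · rw [Function.update_of_ne hwu]

def LevelBound (s : V → ℕ) : Prop := ∀ k, #(level s k) ≤ Fintype.card V - k

theorem levelBound_zero : LevelBound (fun _ : V => 0) := by
  rintro (_ | k)
  · exact card_filter_le _ _
  · simp [level]

theorem LevelBound.idStep [DecidableEq V] {s s' : V → ℕ} (hs : LevelBound s)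
    (h : IdStep s s') : LevelBound s' := by
  obtain ⟨u, v, huv, he, rfl⟩ := h
  intro k
  by_cases hk : k = s u + 1
  · subst hk
    have hup := card_le_card (level_update_subset s u (s u + 1))
    have hlt := card_level_add_two_le huv he
    have hle := hs (s u)
    have hins := card_insert_le u (level s (s u + 1))
    omega
  · rw [level_update_of_ne s u hk]
    exact hs k

theorem LevelBound.lt_card {s : V → ℕ} (hs : LevelBound s) (v : V) : s v < Fintype.card V := by
  by_contra h
  have hv : v ∈ level s (Fintype.card V) := by simpa [level] using h
  have := hs (Fintype.card V)
  have := card_pos.mpr ⟨v, hv⟩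
  omega

end Level

theorem sum_eq_of_injective_of_lt_card {V : Type*} [Fintype V] {s : V → ℕ}
    (hinj : Function.Injective s) (hlt : ∀ v, s v < Fintype.card V) :
    ∑ v, s v = Fintype.card V * (Fintype.card V - 1) / 2 := by
  classical
  have himage : univ.image s = range (Fintype.card V) := by
    refine eq_of_subset_of_card_le (fun x hx => ?_) ?_
    · obtain ⟨v, -, rfl⟩ := mem_image.mp hx
      exact mem_range.mpr (hlt v)
    · rw [card_range, card_image_of_injective _ hinj, card_univ]
  calc ∑ v, s v = ∑ x ∈ univ.image s, x := (sum_image (f := id) fun _ _ _ _ h => hinj h).symm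
    _ = _ := by rw [himage, sum_range_id]

theorem sum_eq_and_levelBound_of_run {V : Type*} [DecidableEq V] [Fintype V]
    {c : ℕ → V → ℕ} (h0 : c 0 = fun _ => 0)
    {L : ℕ} (hstep : ∀ t < L, IdStep (c t) (c (t + 1))) : ∑ v, c L v = L ∧ LevelBound (c L) := by
  induction L with
  | zero => simp [h0, levelBound_zero]
  | succ L ih =>
    obtain ⟨hsum, hbound⟩ := ih fun t ht => hstep t (by omega)
    have hlast := hstep L (by omega)
    exact ⟨by rw [hlast.sum_eq, hsum], hbound.idStep hlast⟩

theorem id_assignment_terminates_general {V : Type*} [DecidableEq V] [Fintype V]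
    (n : ℕ) (hcard : Fintype.card V = n) :
    (¬ ∃ c : ℕ → (V → ℕ), c 0 = (fun _ => 0) ∧ ∀ t : ℕ, IdStep (c t) (c (t + 1))) ∧
    (∀ (L : ℕ) (c : ℕ → (V → ℕ)), c 0 = (fun _ => 0) →
      (∀ t : ℕ, t < L → IdStep (c t) (c (t + 1))) →
      (¬ ∃ s' : V → ℕ, IdStep (c L) s') →
      L = n * (n - 1) / 2) := by
  subst hcard
  refine ⟨fun ⟨c, h0, hstep⟩ => ?_, fun L c h0 hstep hterm => ?_⟩
  · set N := Fintype.card V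
    obtain ⟨hsum, hbound⟩ := sum_eq_and_levelBound_of_run h0 fun t (_ : t < N * N + 1) => hstep t
    have : N * N + 1 ≤ N * N :=
      calc N * N + 1 = ∑ v, c (N * N + 1) v := hsum.symm
        _ ≤ ∑ _v : V, N := sum_le_sum fun v _ => (hbound.lt_card v).le
        _ = N * N := by simp [N]
    omega
  · obtain ⟨hsum, hbound⟩ := sum_eq_and_levelBound_of_run h0 hstep
    rw [← hsum]
    exact sum_eq_of_injective_of_lt_card (IdStep.injective_of_not_exists hterm) hbound.lt_card

/-- There is no infinite sequence of steps from the zero state, and every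
maximal finite sequence of steps from the zero state has length exactly
`n (n - 1) / 2`. -/
theorem id_assignment_terminates {V : Type*} [DecidableEq V] [Fintype V]
    (n : ℕ) (hn : 1 ≤ n) (hcard : Fintype.card V = n) :
    (¬ ∃ c : ℕ → (V → ℕ), c 0 = (fun _ => 0) ∧ ∀ t : ℕ, IdStep (c t) (c (t + 1))) ∧
    (∀ (L : ℕ) (c : ℕ → (V → ℕ)), c 0 = (fun _ => 0) →
      (∀ t : ℕ, t < L → IdStep (c t) (c (t + 1))) →
      (¬ ∃ s' : V → ℕ, IdStep (c L) s') →
      L = n * (n - 1) / 2) :=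
  id_assignment_terminates_general n hcard
end

section
/- Consider a finite nonempty set V of agents, initial values p₀ : V → ℕ, and an infinite schedule of interactions given by pairs (u_t, v_t) of distinct agents for t ∈ ℕ, where the state evolves by p_{t+1}(u_t) = p_{t+1}(v_t) = max(p_t(u_t), p_t(v_t)) and p_{t+1}(w) = p_t(w) for all other agents w. If every ordered pair of distinct agents occurs infinitely often in the schedule, then there exists a time T such that for all t ≥ T and all agents w, p_t(w) = max_{v ∈ V} p₀(v). -/
/-- Max-propagation: if every ordered pair of distinct agents interacts
infinitely often, then eventually every agent holds the maximum of the
initial values. -/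
theorem max_propagation {V : Type*} [Fintype V] [DecidableEq V] [Nonempty V]
    (p : ℕ → V → ℕ) (u v : ℕ → V)
    (hdist : ∀ t : ℕ, u t ≠ v t)
    (hstep : ∀ t : ℕ, ∀ w : V,
      p (t + 1) w = if w = u t ∨ w = v t then max (p t (u t)) (p t (v t)) else p t w)
    (hfair : ∀ a b : V, a ≠ b → {t : ℕ | u t = a ∧ v t = b}.Infinite) :
    ∃ T : ℕ, ∀ t : ℕ, T ≤ t → ∀ w : V, p t w = Finset.univ.sup (p 0) := by
  set M := Finset.univ.sup (p 0) with hM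
  -- values are monotone in time
  have hmono : ∀ t w, p t w ≤ p (t + 1) w := by
    intro t w
    rw [hstep t w]
    split
    · rcases ‹w = u t ∨ w = v t› with h | h <;> subst h
      · exact le_max_left _ _
      · exact le_max_right _ _
    · exact le_rfl
  have hmono' : ∀ s t w, s ≤ t → p s w ≤ p t w := by
    intro s t w h
    induction t with
    | zero => simpa [Nat.le_zero.mp h]
    | succ n ih =>
      rcases Nat.lt_or_ge s (n + 1) with h' | h'
      · exact le_trans (ih (Nat.lt_succ_iff.mp h')) (hmono n w)
      · have : s = n + 1 := le_antisymm h h'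
        simp [this]
  -- values are bounded by M
  have hle : ∀ t w, p t w ≤ M := by
    intro t
    induction t with
    | zero => intro w; exact Finset.le_sup (Finset.mem_univ w)
    | succ n ih =>
      intro w
      rw [hstep n w]
      split
      · exact max_le (ih _) (ih _)
      · exact ih w
  -- once an agent holds M, it holds forever
  have hpersist : ∀ t w, p t w = M → ∀ s, t ≤ s → p s w = M := by
    intro t w h s hs
    exact le_antisymm (hle s w) (h ▸ hmono' t s w hs)
  -- an initial max-holder
  obtain ⟨a, -, ha⟩ := Finset.exists_mem_eq_sup Finset.univ Finset.univ_nonempty (p 0)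
  have haM : ∀ t, p t a = M := fun t => hpersist 0 a ha.symm t (Nat.zero_le t)
  -- each agent eventually holds M forever
  have key : ∀ b : V, ∃ T, ∀ s, T ≤ s → p s b = M := by
    intro b
    by_cases hb : b = a
    · exact ⟨0, fun s _ => hb ▸ haM s⟩
    · obtain ⟨t, ht⟩ := (hfair a b (Ne.symm hb)).nonempty
      refine ⟨t + 1, fun s hs => hpersist (t + 1) b ?_ s hs⟩
      rw [hstep t b]
      rw [if_pos (Or.inr ht.2.symm), ht.1, ht.2, haM t]
      exact max_eq_left (hle t b)
  choose T hT using key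
  refine ⟨Finset.univ.sup T, fun t ht w => hT w t (le_trans (Finset.le_sup (Finset.mem_univ w)) ht)⟩
end

section
/- In the doubling system on a finite set V of agents, every step preserves the weight: if x' is obtained from x by a single step, then W(x') = W(x), where W(x) = Σ_{w ∈ V with x(w) > 0} 2^{x(w) − 1}. -/
/-- A step of the doubling system: two distinct agents with equal nonzero
values interact; the initiator's value increases by one and the responder's
value is reset to zero. -/
def DoubStep {V : Type*} [DecidableEq V] (x x' : V → ℕ) : Prop :=
  ∃ u v : V, u ≠ v ∧ x u = x v ∧ 0 < x u ∧
    x' = Function.update (Function.update x u (x u + 1)) v 0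

/-- The weight of a state: `∑_{w : x w > 0} 2^(x w - 1)`. -/
def doubWeight {V : Type*} [DecidableEq V] [Fintype V] (x : V → ℕ) : ℕ :=
  ∑ w ∈ Finset.univ.filter (fun w => 0 < x w), 2 ^ (x w - 1)

lemma doubWeight_eq {V : Type*} [DecidableEq V] [Fintype V] (x : V → ℕ) :
    doubWeight x = ∑ w : V, (if 0 < x w then 2 ^ (x w - 1) else 0) := by
  rw [doubWeight, Finset.sum_filter]

/-- Every step of the doubling system preserves the weight. -/
theorem doubStep_preserves_weight {V : Type*} [DecidableEq V] [Fintype V]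
    (x x' : V → ℕ) (h : DoubStep x x') : doubWeight x' = doubWeight x := by
  obtain ⟨u, v, huv, hxy, hpos, rfl⟩ := h
  rw [doubWeight_eq, doubWeight_eq]
  set g : (V → ℕ) → V → ℕ := fun y w => if 0 < y w then 2 ^ (y w - 1) else 0 with hg
  have hu : u ∈ (Finset.univ.erase v) := Finset.mem_erase.2 ⟨huv, Finset.mem_univ u⟩
  rw [← Finset.add_sum_erase _ _ (Finset.mem_univ v),
      ← Finset.add_sum_erase _ _ hu,
      ← Finset.add_sum_erase Finset.univ (g x) (Finset.mem_univ v),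
      ← Finset.add_sum_erase _ (g x) hu]
  have hsame : ∀ w ∈ (Finset.univ.erase v).erase u,
      g (Function.update (Function.update x u (x u + 1)) v 0) w = g x w := by
    intro w hw
    simp only [Finset.mem_erase, Finset.mem_univ, and_true] at hw
    obtain ⟨hwu, hwv⟩ := hw
    simp [g, Function.update_of_ne hwv, Function.update_of_ne hwu]
  rw [Finset.sum_congr rfl hsame]
  have h3 : g x v = 2 ^ (x u - 1) := by simp [g, ← hxy, hpos]
  have h4 : g x u = 2 ^ (x u - 1) := by simp [g, hpos]
  simp only [Function.update_self, Function.update_of_ne huv, lt_irrefl, if_false,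
    Nat.succ_sub_one, Nat.succ_pos, if_true, zero_add]
  rw [h3, h4, show ((Finset.univ.erase v).erase u).sum (g x)
      = ∑ x_1 ∈ (Finset.univ.erase v).erase u, g x x_1 from rfl]
  have : 2 ^ (x u - 1) + 2 ^ (x u - 1) = 2 ^ (x u) := by
    rw [← two_mul, ← pow_succ']
    congr 1
    omega
  omega
end

section
/- In the doubling system on a finite set V of agents, let x₀ be a state with x₀(w) ∈ {0, 1} for all w, and let N_a = |{w : x₀(w) = 1}|. If a state x is reachable from x₀ by the reflexive-transitive closure of the step relation and some agent u has x(u) = k ≥ 1, then 2^{k−1} ≤ N_a; in particular every agent's value is bounded by log₂(N_a) + 1, so each value requires only O(log log n) bits of memory in a population of size n. -/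
theorem Fintype.sum_comp_update_add {ι α M : Type*} [Fintype ι] [DecidableEq ι]
    [AddCommMonoid M] (g : α → M) (x : ι → α) (i : ι) (a : α) :
    ∑ j, g (Function.update x i a j) + g (x i) = ∑ j, g (x j) + g a := by
  simp only [← Function.comp_apply (f := g), Function.comp_update,
    Finset.sum_update_of_mem (Finset.mem_univ i),
    Finset.sum_eq_add_sum_sdiff_singleton_of_mem (Finset.mem_univ i) (g ∘ x)]
  abel

namespace DoubStep

def valueWeight (n : ℕ) : ℕ := if n = 0 then 0 else 2 ^ (n - 1)

def weight {V : Type*} [Fintype V] (x : V → ℕ) : ℕ := ∑ w, valueWeight (x w)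

theorem valueWeight_zero : valueWeight 0 = 0 := rfl

theorem valueWeight_succ_of_pos {n : ℕ} (hn : 0 < n) :
    valueWeight (n + 1) = valueWeight n + valueWeight n := by
  obtain ⟨m, rfl⟩ := Nat.exists_eq_add_of_lt hn
  simp [valueWeight, pow_succ, mul_two]

theorem valueWeight_of_le_one {n : ℕ} (hn : n ≤ 1) : valueWeight n = if n = 1 then 1 else 0 := by
  interval_cases n <;> rfl

variable {V : Type*} [Fintype V]

theorem weight_eq_card_of_le_one {x : V → ℕ} (hx : ∀ w, x w ≤ 1) :
    weight x = (Finset.univ.filter (fun w => x w = 1)).card := by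
  simp only [weight, valueWeight_of_le_one (hx _), Finset.card_filter]

theorem valueWeight_le_weight (x : V → ℕ) (u : V) : valueWeight (x u) ≤ weight x :=
  Finset.single_le_sum (f := fun w => valueWeight (x w)) (fun _ _ => Nat.zero_le _)
    (Finset.mem_univ u)

variable [DecidableEq V]

theorem weight_eq {x x' : V → ℕ} (h : DoubStep x x') : weight x' = weight x := by
  obtain ⟨u, v, huv, heq, hpos, rfl⟩ := h
  have hv := Fintype.sum_comp_update_add valueWeight (Function.update x u (x u + 1)) v 0
  have hu := Fintype.sum_comp_update_add valueWeight x u (x u + 1)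
  rw [Function.update_of_ne huv.symm, ← heq, valueWeight_zero] at hv
  rw [valueWeight_succ_of_pos hpos] at hu
  simp only [weight]
  omega

theorem weight_eq_of_reflTransGen {x₀ x : V → ℕ} (h : Relation.ReflTransGen DoubStep x₀ x) :
    weight x = weight x₀ := by
  induction h with
  | refl => rfl
  | tail _ hstep ih => rw [hstep.weight_eq, ih]

end DoubStep

/-- In a reachable state of the doubling system, an agent holding value
`k ≥ 1` witnesses `2^(k-1) ≤ N_a`; in particular every value is at most
`log₂ N_a + 1`. -/
theorem doubling_value_bound {V : Type*} [DecidableEq V] [Fintype V]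
    (x₀ : V → ℕ) (h₀ : ∀ w : V, x₀ w ≤ 1)
    (Na : ℕ) (hNa : Na = (Finset.univ.filter (fun w => x₀ w = 1)).card)
    (x : V → ℕ) (hreach : Relation.ReflTransGen DoubStep x₀ x)
    (u : V) (k : ℕ) (hk : 1 ≤ k) (hxu : x u = k) :
    2 ^ (k - 1) ≤ Na ∧ k ≤ Nat.log 2 Na + 1 := by
  have hpow : 2 ^ (k - 1) ≤ Na := by
    calc 2 ^ (k - 1) = DoubStep.valueWeight (x u) := by
          rw [hxu, DoubStep.valueWeight, if_neg (by omega)]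
      _ ≤ DoubStep.weight x := DoubStep.valueWeight_le_weight x u
      _ = Na := by
          rw [DoubStep.weight_eq_of_reflTransGen hreach, DoubStep.weight_eq_card_of_le_one h₀, hNa]
  have hlog : k - 1 ≤ Nat.log 2 Na := Nat.le_log_of_pow_le (by norm_num) hpow
  exact ⟨hpow, by omega⟩
end

section
/- In the doubling system on a finite set V of agents, let x₀ be a state with x₀(w) ∈ {0, 1} for all w and N_a = |{w : x₀(w) = 1}| ≥ 1. Let x be reachable from x₀ by the reflexive-transitive closure of the step relation and suppose x admits no further step (equivalently, the nonzero values of x are pairwise distinct). Then: exactly one agent has a nonzero value in x if and only if N_a is a power of 2; moreover, if exactly one agent has nonzero value k, then N_a = 2^{k−1}. -/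
open Finset

private def phi (n : ℕ) : ℕ := 2 ^ n / 2

private lemma phi_pos {n : ℕ} (h : 0 < n) : phi n = 2 ^ (n - 1) := by
  obtain ⟨m, rfl⟩ := Nat.exists_eq_add_of_lt h
  simp [phi, pow_succ]

private lemma doubStep_weight {V : Type*} [DecidableEq V] [Fintype V]
    {x x' : V → ℕ} (h : DoubStep x x') :
    ∑ w, phi (x' w) = ∑ w, phi (x w) := by
  obtain ⟨u, v, huv, hxy, hpos, rfl⟩ := h
  have hcomp : (fun w => phi ((Function.update (Function.update x u (x u + 1)) v 0) w))
      = Function.update (Function.update (fun w => phi (x w)) u (phi (x u + 1))) v (phi 0) := by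
    funext w
    by_cases hv : w = v
    · subst hv; simp
    · by_cases hu : w = u
      · subst hu
        simp [Function.update_of_ne hv, Function.update_self]
      · simp [Function.update_of_ne hv, Function.update_of_ne hu]
  rw [hcomp]
  rw [Finset.sum_update_of_mem (Finset.mem_univ v)]
  rw [Finset.sum_update_of_mem (by simp [huv] : u ∈ Finset.univ \ {v})]
  rw [Finset.sum_eq_add_sum_sdiff_singleton_of_mem (Finset.mem_univ v) (fun w => phi (x w))]
  rw [Finset.sum_eq_add_sum_sdiff_singleton_of_mem (by simp [huv] : u ∈ Finset.univ \ {v})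
    (fun w => phi (x w))]
  have hv : 0 < x v := hxy ▸ hpos
  rw [hxy, phi_pos (Nat.succ_pos _), phi_pos hv]
  have hphi0 : phi 0 = 0 := rfl
  rw [hphi0, Nat.succ_sub_one]
  have key : 2 ^ (x v) = 2 ^ (x v - 1) + 2 ^ (x v - 1) := by
    obtain ⟨m, hm⟩ : ∃ m, x v = m + 1 := ⟨x v - 1, by omega⟩
    rw [hm]
    simp [pow_succ]
    ring
  omega

private lemma sum_two_pow_range (n : ℕ) : ∑ i ∈ range n, 2 ^ i = 2 ^ n - 1 := by
  induction n with
  | zero => simp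
  | succ n ih =>
    rw [Finset.sum_range_succ, ih]
    have h1 : 1 ≤ 2 ^ n := Nat.one_le_two_pow
    have h2 : 2 ^ (n + 1) = 2 * 2 ^ n := by ring
    omega

private lemma sum_two_pow_eq_pow {T : Finset ℕ} {k : ℕ}
    (h : ∑ i ∈ T, 2 ^ i = 2 ^ k) : T = {k} := by
  have hne : T.Nonempty := by
    rcases T.eq_empty_or_nonempty with rfl | hne
    · simp at h
      exact absurd h.symm (pow_ne_zero k two_ne_zero)
    · exact hne
  set m := T.max' hne with hmdef
  have hmem : m ∈ T := T.max'_mem hne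
  have hub : ∑ i ∈ T, 2 ^ i ≤ 2 ^ (m + 1) - 1 := by
    rw [← sum_two_pow_range (m + 1)]
    apply Finset.sum_le_sum_of_subset
    intro i hi
    simp only [Finset.mem_range]
    exact Nat.lt_succ_of_le (T.le_max' i hi)
  have hlb : 2 ^ m ≤ ∑ i ∈ T, 2 ^ i :=
    Finset.single_le_sum (fun i _ => Nat.zero_le _) hmem
  have hmk : m = k := by
    have h1 : 2 ^ m ≤ 2 ^ k := h ▸ hlb
    have h2 : 2 ^ k < 2 ^ (m + 1) := by
      have h3 := h ▸ hub
      have h4 : 1 ≤ 2 ^ (m + 1) := Nat.one_le_two_pow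
      omega
    have hm_le : m ≤ k := (Nat.pow_le_pow_iff_right (by norm_num)).mp h1
    have hk_lt : k < m + 1 := (Nat.pow_lt_pow_iff_right (by norm_num)).mp h2
    omega
  subst hmk
  have hsplit : ∑ i ∈ T, 2 ^ i = 2 ^ m + ∑ i ∈ T.erase m, 2 ^ i :=
    (Finset.add_sum_erase T _ hmem).symm
  have herase : ∑ i ∈ T.erase m, 2 ^ i = 0 := by omega
  have hempty : T.erase m = ∅ := by
    by_contra hne'
    obtain ⟨j, hj⟩ := Finset.nonempty_iff_ne_empty.mpr hne'
    have h5 : 2 ^ j ≤ ∑ i ∈ T.erase m, 2 ^ i :=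
      Finset.single_le_sum (fun i _ => Nat.zero_le _) hj
    have h6 : 1 ≤ 2 ^ j := Nat.one_le_two_pow
    omega
  ext i
  simp only [Finset.mem_singleton]
  constructor
  · intro hi
    by_contra hne'
    have hmem' : i ∈ T.erase m := Finset.mem_erase.mpr ⟨hne', hi⟩
    rw [hempty] at hmem'
    exact absurd hmem' (Finset.notMem_empty i)
  · rintro rfl; exact hmem

/-- Correctness of the logarithmic-predicate protocol: in a terminal reachable
state, exactly one agent holds a nonzero value iff `N_a` is a power of 2, and
if the single nonzero value is `k` then `N_a = 2^(k-1)`. -/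
theorem doubling_terminal_characterization {V : Type*} [DecidableEq V]
    [Fintype V] (x₀ : V → ℕ) (h₀ : ∀ w : V, x₀ w ≤ 1)
    (Na : ℕ) (hNa : Na = (Finset.univ.filter (fun w => x₀ w = 1)).card)
    (hNa1 : 1 ≤ Na)
    (x : V → ℕ) (hreach : Relation.ReflTransGen DoubStep x₀ x)
    (hterm : ¬ ∃ x' : V → ℕ, DoubStep x x') :
    ((Finset.univ.filter (fun w => 0 < x w)).card = 1 ↔ ∃ k : ℕ, Na = 2 ^ k) ∧
    (∀ u : V, Finset.univ.filter (fun w => 0 < x w) = {u} →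
      Na = 2 ^ (x u - 1)) := by
  -- weight invariant
  have hW : ∑ w, phi (x w) = ∑ w, phi (x₀ w) := by
    clear hterm
    induction hreach with
    | refl => rfl
    | tail _ hstep ih => rw [doubStep_weight hstep, ih]
  -- initial weight = Na
  have hW0 : ∑ w, phi (x₀ w) = Na := by
    rw [hNa, Finset.card_filter]
    apply Finset.sum_congr rfl
    intro w _
    have := h₀ w
    interval_cases h : x₀ w <;> simp [phi]
  -- terminal: nonzero values pairwise distinct
  have hdist : ∀ u v : V, u ≠ v → 0 < x u → x u ≠ x v := by
    intro u v huv hu hxy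
    exact hterm ⟨_, u, v, huv, hxy, hu, rfl⟩
  set S := Finset.univ.filter (fun w => 0 < x w) with hS
  have hmemS : ∀ w, w ∈ S ↔ 0 < x w := by intro w; simp [hS]
  have hinj : Set.InjOn (fun w => x w - 1) S := by
    intro a ha b hb hab
    simp only at hab
    by_contra hne
    have hxa : 0 < x a := (hmemS a).mp ha
    have hxb : 0 < x b := (hmemS b).mp hb
    exact hdist a b hne hxa (by omega)
  have hWS : Na = ∑ w ∈ S, 2 ^ (x w - 1) := by
    rw [← hW0, ← hW]
    have h1 : ∑ w, phi (x w) = ∑ w ∈ S, phi (x w) := by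
      symm
      apply Finset.sum_subset (Finset.subset_univ S)
      intro w _ hw
      have h2 : ¬ 0 < x w := fun h => hw ((hmemS w).mpr h)
      have h3 : x w = 0 := by omega
      simp [h3, phi]
    rw [h1]
    apply Finset.sum_congr rfl
    intro w hw
    exact phi_pos ((hmemS w).mp hw)
  have hWT : Na = ∑ i ∈ S.image (fun w => x w - 1), 2 ^ i := by
    rw [Finset.sum_image (fun a ha b hb => hinj ha hb), ← hWS]
  have part2 : ∀ u : V, S = {u} → Na = 2 ^ (x u - 1) := by
    intro u hu
    rw [hWS, hu, Finset.sum_singleton]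
  refine ⟨⟨?_, ?_⟩, part2⟩
  · intro hcard
    obtain ⟨u, hu⟩ := Finset.card_eq_one.mp hcard
    exact ⟨x u - 1, part2 u hu⟩
  · rintro ⟨k, hk⟩
    have himg : S.image (fun w => x w - 1) = {k} :=
      sum_two_pow_eq_pow (hWT.symm.trans hk)
    have hcard : S.card = (S.image (fun w => x w - 1)).card :=
      (Finset.card_image_of_injOn hinj).symm
    rw [himg, Finset.card_singleton] at hcard
    exact hcard
end
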